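/- Let H ⊆ 2^V \ {∅} be a hypergraph and x ∈ ℤ≥0^V a position. If the j-th unit vector e_j is subtracted from x (with x_j ≥ 1), then h(x − e_j) ≥ h(x) − 1, where h is the height function of hypergraph Nim on H. -/

import Mathlib

/-!
Induction on the length of a play from `x`. If its first move `x → y` leaves coordinate `j`
untouched, the same move leads from `x - e_j` to `y - e_j`, and we recurse. Otherwise it
decreases coordinate `j`, so `y ≤ x - e_j`, and the rest of the play can be replayed from the
larger position `x - e_j` by adding `x - e_j - y` to every position.
-/

/-- A move in hypergraph Nim: choose an edge `E ∈ H`, strictly decrease all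
coordinates in `E`, leave all other coordinates unchanged. -/
def Move {V : Type*} (H : Set (Set V)) (x x' : V → ℕ) : Prop :=
  ∃ E ∈ H, (∀ i ∈ E, x' i < x i) ∧ ∀ i ∉ E, x' i = x i

/-- The height of a position: the maximum number of consecutive moves from `x`. -/
noncomputable def height {V : Type*} (H : Set (Set V)) (x : V → ℕ) : ℕ :=
  sSup {n : ℕ | ∃ f : ℕ → V → ℕ, f 0 = x ∧ ∀ i < n, Move H (f i) (f (i + 1))}

section

variable {V : Type*} {H : Set (Set V)}

def Playable (H : Set (Set V)) (n : ℕ) (x : V → ℕ) : Prop :=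
  ∃ f : ℕ → V → ℕ, f 0 = x ∧ ∀ i < n, Move H (f i) (f (i + 1))

namespace Move

variable {x y : V → ℕ}

theorem le (h : Move H x y) : y ≤ x := by
  obtain ⟨E, -, hlt, heq⟩ := h
  intro i
  by_cases hi : i ∈ E
  · exact (hlt i hi).le
  · exact (heq i hi).le

theorem add_right (h : Move H x y) (z : V → ℕ) : Move H (x + z) (y + z) := by
  obtain ⟨E, hE, hlt, heq⟩ := h
  refine ⟨E, hE, fun i hi => ?_, fun i hi => ?_⟩
  · simpa using hlt i hi
  · simp [heq i hi]

theorem update_pred [DecidableEq V] (h : Move H x y) {j : V} (hj : y j = x j) :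
    Move H (Function.update x j (x j - 1)) (Function.update y j (y j - 1)) := by
  obtain ⟨E, hE, hlt, heq⟩ := h
  have hjE : j ∉ E := fun hjE => (hlt j hjE).ne hj
  refine ⟨E, hE, fun i hi => ?_, fun i hi => ?_⟩
  · have hij : i ≠ j := fun hij => hjE (hij ▸ hi)
    simpa [hij] using hlt i hi
  · rcases eq_or_ne i j with rfl | hij
    · simp [hj]
    · simpa [hij] using heq i hi

end Move

namespace Playable

variable {n : ℕ} {x y : V → ℕ}

theorem zero (x : V → ℕ) : Playable H 0 x :=
  ⟨fun _ => x, rfl, fun _ hi => absurd hi (Nat.not_lt_zero _)⟩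

theorem cons (hxy : Move H x y) (hy : Playable H n y) : Playable H (n + 1) x := by
  obtain ⟨f, rfl, hf⟩ := hy
  refine ⟨fun i => Nat.casesOn i x fun k => f k, rfl, fun i hi => ?_⟩
  cases i with
  | zero => exact hxy
  | succ k => exact hf k (by omega)

theorem exists_move (hx : Playable H (n + 1) x) : ∃ y, Move H x y ∧ Playable H n y := by
  obtain ⟨f, rfl, hf⟩ := hx
  exact ⟨f 1, hf 0 (by omega), fun i => f (i + 1), rfl, fun i hi => hf (i + 1) (by omega)⟩

theorem mono (hxy : x ≤ y) (hx : Playable H n x) : Playable H n y := by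
  obtain ⟨f, rfl, hf⟩ := hx
  exact ⟨fun i => f i + (y - f 0), add_tsub_cancel_of_le hxy,
    fun i hi => (hf i hi).add_right _⟩

theorem update_pred [DecidableEq V] (j : V) (hx : Playable H (n + 1) x) :
    Playable H n (Function.update x j (x j - 1)) := by
  induction n generalizing x with
  | zero => exact zero _
  | succ n ih =>
    obtain ⟨y, hxy, hy⟩ := hx.exists_move
    rcases (hxy.le j).eq_or_lt with hj | hj
    · exact cons (hxy.update_pred hj) (ih hy)
    · exact hy.mono (le_update_iff.mpr ⟨Nat.le_sub_one_of_lt hj, fun i _ => hxy.le i⟩)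

end Playable

/-- `sSup` of an unbounded set of naturals is `0`, so a nonzero height is attained. -/
theorem bddAbove_playable_of_height_ne_zero {x : V → ℕ} (h : height H x ≠ 0) :
    BddAbove {n | Playable H n x} := by
  by_contra hbdd
  exact h (Nat.sSup_of_not_bddAbove hbdd)

theorem playable_height {x : V → ℕ} (h : height H x ≠ 0) : Playable H (height H x) x :=
  Nat.sSup_mem ⟨0, Playable.zero x⟩ (bddAbove_playable_of_height_ne_zero h)

theorem le_height_of_le {n : ℕ} {x y : V → ℕ} (hy : height H y ≠ 0) (hxy : x ≤ y)
    (hx : Playable H n x) : n ≤ height H x :=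
  le_csSup ((bddAbove_playable_of_height_ne_zero hy).mono fun _ => Playable.mono hxy) hx

end

theorem stmt_9_general {V : Type*} [DecidableEq V] (H : Set (Set V))
    (x : V → ℕ) (j : V) :
    height H x - 1 ≤ height H (Function.update x j (x j - 1)) := by
  by_cases h0 : height H x = 0
  · simp [h0]
  have hplay : Playable H (height H x - 1 + 1) x := by
    rw [Nat.sub_add_cancel (Nat.one_le_iff_ne_zero.mpr h0)]
    exact playable_height h0
  exact le_height_of_le h0 (update_le_iff.mpr ⟨tsub_le_self, fun _ _ => le_rfl⟩)
    (hplay.update_pred j)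

/-- Decreasing a single coordinate by one decreases the height by at most one:
`h(x − e_j) ≥ h(x) − 1`. -/
theorem stmt_9 {V : Type*} [Fintype V] [DecidableEq V] (H : Set (Set V))
    (x : V → ℕ) (j : V) (hj : 1 ≤ x j) :
    height H x - 1 ≤ height H (Function.update x j (x j - 1)) :=
  stmt_9_general H x j
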